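/- arXiv:1806.10849 — 2 statements merged into one kernel-verified Lean document; each statement's English description precedes it below -/
import Mathlib

section
/- Let 1 ≤ p < ∞, let d ≥ 1, and set φ_d(z) = (z_1 + z_2 + ⋯ + z_d)/√d. Then ‖φ_d‖_{(H^p)*} = ‖φ_d‖_{L^p(𝕋^∞)}^{-1}; that is, the supremum of |⟨f, φ_d⟩_{L²(𝕋^∞)}| / ‖f‖_{L^p(𝕋^∞)} over nonzero analytic polynomials f equals the reciprocal of the L^p(𝕋^∞) norm of φ_d. -/
open MeasureTheory Complex Filter
open scoped ENNReal NNReal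

noncomputable instance : MeasurableSpace Circle := borel Circle
instance : BorelSpace Circle := ⟨rfl⟩

/-- The countably infinite polytorus `𝕋^∞`. -/
abbrev Polytorus : Type := ℕ → Circle

/-- The Haar probability measure on a nonempty compact group. -/
noncomputable def haarP (G : Type*) [Group G] [TopologicalSpace G] [IsTopologicalGroup G]
    [CompactSpace G] [Nonempty G] [MeasurableSpace G] [BorelSpace G] : Measure G :=
  Measure.haarMeasure ⊤

/-- The Haar probability measure `μ_∞` on `𝕋^∞`, i.e. the countable product of normalized
Lebesgue arc measures. -/
noncomputable def muInf : Measure Polytorus := haarP Polytorus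

instance : IsProbabilityMeasure muInf :=
  ⟨by simpa [muInf, haarP] using
    Measure.haarMeasure_self (K₀ := (⊤ : TopologicalSpace.PositiveCompacts Polytorus))⟩

/-- The analytic monomial `z ^ α` for a finitely supported multi-index `α`. -/
def monomial (α : ℕ →₀ ℕ) : Polytorus → ℂ := fun z => α.prod fun j n => (z j : ℂ) ^ n

/-- Analytic polynomials on `𝕋^∞`: finite linear combinations of analytic monomials. -/
def IsAnalyticPoly (f : Polytorus → ℂ) : Prop :=
  f ∈ Submodule.span ℂ (Set.range monomial)

/-- The `L^p(𝕋^∞)` norm, for finite exponent `p`. -/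
noncomputable def lpNorm (p : ℝ) (f : Polytorus → ℂ) : ℝ :=
  (∫ z, ‖f z‖ ^ p ∂muInf) ^ (1 / p)

/-- The `L²(𝕋^∞)` pairing `⟨f, g⟩ = ∫ f conj(g) dμ_∞`. -/
noncomputable def pairing (f g : Polytorus → ℂ) : ℂ :=
  ∫ z, f z * (starRingEnd ℂ) (g z) ∂muInf

/-- The dual Hardy norm `‖φ‖_{(H^p)^*}`, the supremum of `|⟨f, φ⟩|/‖f‖_{L^p}` over all
nonzero analytic polynomials `f`. -/
noncomputable def dualNorm (p : ℝ) (φ : Polytorus → ℂ) : ℝ :=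
  sSup {t : ℝ | ∃ f : Polytorus → ℂ, IsAnalyticPoly f ∧ f ≠ 0 ∧ t = ‖pairing f φ‖ / lpNorm p f}

/-- The function `φ_d(z) = (z_1 + ⋯ + z_d)/√d` on `𝕋^∞`. -/
noncomputable def phiFn (d : ℕ) : Polytorus → ℂ :=
  fun z => (∑ j ∈ Finset.range d, (z j : ℂ)) / (Real.sqrt d : ℂ)

/-!
Since `⟨φ_d, φ_d⟩ = 1`, the choice `f = φ_d` shows `‖φ_d‖_{(H^p)*} ≥ ‖φ_d‖_p⁻¹`. Conversely, let `f`
be an analytic polynomial of degree `< K` and `ζ` a primitive `K`-th root of unity. Averaging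
`ζ^(-k) f(ζ^k z)` over `k < K` keeps exactly the monomials of total degree one; doing the same with
only `z_1, …, z_d` rotated keeps `z_1, …, z_d`; averaging over the cyclic shifts of `z_1, …, z_d`
then sends each of them to `φ_d / √d`. So the composite maps `f` to `⟨f, φ_d⟩ φ_d`. Each step is an
average of operators `f ↦ c · f ∘ τ` with `|c| = 1` and `τ` preserving Haar measure, hence a
contraction of `L^p` for `p ≥ 1`, which gives `|⟨f, φ_d⟩| ‖φ_d‖_p ≤ ‖f‖_p`.
-/

open Finset ComplexConjugate

section TwistedAverage

variable {X ι : Type*}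

noncomputable def twistedAverage (s : Finset ι) (c : ι → ℂ) (τ : ι → X → X) :
    (X → ℂ) →ₗ[ℂ] (X → ℂ) :=
  (#s : ℂ)⁻¹ • ∑ i ∈ s, c i • LinearMap.funLeft ℂ ℂ (τ i)

variable {s : Finset ι} {c : ι → ℂ} {τ : ι → X → X}

lemma twistedAverage_eq (f : X → ℂ) :
    twistedAverage s c τ f = (#s : ℂ)⁻¹ • ∑ i ∈ s, c i • (f ∘ τ i) := by
  simp [twistedAverage, LinearMap.funLeft]

lemma twistedAverage_apply (f : X → ℂ) (x : X) :
    twistedAverage s c τ f x = (#s : ℂ)⁻¹ * ∑ i ∈ s, c i * f (τ i x) := by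
  simp [twistedAverage_eq]

variable [MeasurableSpace X] {μ : Measure X} {f : X → ℂ}

lemma MeasureTheory.AEStronglyMeasurable.twistedAverage
    (hτ : ∀ i ∈ s, MeasurePreserving (τ i) μ μ) (hf : AEStronglyMeasurable f μ) :
    AEStronglyMeasurable (twistedAverage s c τ f) μ := by
  rw [twistedAverage_eq]
  exact (Finset.aestronglyMeasurable_sum _ fun i hi =>
    (hf.comp_measurePreserving (hτ i hi)).const_smul (c i)).const_smul _

lemma eLpNorm_twistedAverage_le (hc : ∀ i ∈ s, ‖c i‖ = 1)
    (hτ : ∀ i ∈ s, MeasurePreserving (τ i) μ μ) (hf : AEStronglyMeasurable f μ)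
    {q : ℝ≥0∞} (hq : 1 ≤ q) : eLpNorm (twistedAverage s c τ f) q μ ≤ eLpNorm f q μ := by
  rcases s.eq_empty_or_nonempty with rfl | hs
  · simp [twistedAverage_eq]
  have hterm : ∀ i ∈ s, eLpNorm (c i • (f ∘ τ i)) q μ = eLpNorm f q μ := fun i hi => by
    rw [eLpNorm_const_smul, eLpNorm_comp_measurePreserving hf (hτ i hi), enorm_eq_nnnorm,
      ← nnnorm_norm, hc i hi]
    simp
  have hsum : eLpNorm (∑ i ∈ s, c i • (f ∘ τ i)) q μ ≤ #s * eLpNorm f q μ := by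
    refine (eLpNorm_sum_le (fun i hi =>
      (hf.comp_measurePreserving (hτ i hi)).const_smul (c i)) hq).trans_eq ?_
    rw [Finset.sum_congr rfl hterm, Finset.sum_const, nsmul_eq_mul]
  have hcard : (#s : ℝ≥0∞) ≠ 0 := by simpa using hs.ne_empty
  have hinv : ‖((#s : ℂ))⁻¹‖ₑ = (#s : ℝ≥0∞)⁻¹ := by
    rw [enorm_inv (by simpa using hs.ne_empty)]
    simp [enorm_eq_nnnorm]
  rw [twistedAverage_eq, eLpNorm_const_smul, hinv]
  calc (#s : ℝ≥0∞)⁻¹ * eLpNorm (∑ i ∈ s, c i • (f ∘ τ i)) q μ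
      ≤ (#s : ℝ≥0∞)⁻¹ * (#s * eLpNorm f q μ) := by gcongr
    _ = eLpNorm f q μ := by
        rw [← mul_assoc, ENNReal.inv_mul_cancel hcard (ENNReal.natCast_ne_top _), one_mul]

end TwistedAverage

lemma integral_eq_zero_of_mul_left_eq {G : Type*} [Group G] [MeasurableSpace G]
    [MeasurableMul G] {μ : Measure G} [μ.IsMulLeftInvariant] {F : G → ℂ} (c : G) {e : ℂ}
    (he : e ≠ 1) (hF : ∀ z, F (c * z) = e * F z) : ∫ z, F z ∂μ = 0 := by
  have h := integral_mul_left_eq_self (μ := μ) F c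
  simp only [hF, integral_const_mul] at h
  exact eq_zero_of_mul_eq_self_left he h

lemma exists_isPrimitiveRoot_circle {K : ℕ} (hK : K ≠ 0) :
    ∃ ζ : Circle, IsPrimitiveRoot ζ K := by
  refine ⟨Circle.exp (2 * Real.pi / K), IsPrimitiveRoot.of_map_of_injective (f := Circle.coeHom)
    ?_ Circle.coe_injective⟩
  convert Complex.isPrimitiveRoot_exp K hK using 1
  change ((Circle.exp _ : Circle) : ℂ) = _
  rw [Circle.coe_exp]
  push_cast
  ring_nf

lemma sum_range_pow_mul_inv_pow {ζ : Circle} {K : ℕ} (hζ : IsPrimitiveRoot ζ K) (a m : ℕ) :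
    ∑ k ∈ range K, (((ζ ^ k) ^ a * ((ζ ^ k) ^ m)⁻¹ : Circle) : ℂ) =
      if a ≡ m [MOD K] then (K : ℂ) else 0 := by
  set ξ : Circle := ζ ^ a * (ζ ^ m)⁻¹
  have hterm : ∀ k, (ζ ^ k) ^ a * ((ζ ^ k) ^ m)⁻¹ = ξ ^ k := fun k => by
    simp only [ξ, mul_pow, inv_pow, ← pow_mul, mul_comm k]
  simp only [hterm, Circle.coe_pow]
  split_ifs with h
  · have hξ : ξ = 1 := by
      rw [mul_inv_eq_one, pow_eq_pow_iff_modEq, ← hζ.eq_orderOf]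
      exact h
    simp [hξ]
  · have hξ : (ξ : ℂ) ≠ 1 := by
      rwa [Ne, Circle.coe_eq_one, mul_inv_eq_one, pow_eq_pow_iff_modEq, ← hζ.eq_orderOf]
    have hξK : (ξ : ℂ) ^ K = 1 := by
      rw [← Circle.coe_pow, ← hterm, hζ.pow_eq_one]
      simp
    rw [geom_sum_eq hξ, hξK, sub_self, zero_div]

instance : muInf.IsHaarMeasure := by unfold muInf haarP; infer_instance

def permCoords (π : Equiv.Perm ℕ) : Polytorus →* Polytorus where
  toFun z := z ∘ π
  map_one' := rfl
  map_mul' _ _ := rfl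

lemma measurePreserving_permCoords (π : Equiv.Perm ℕ) :
    MeasurePreserving (permCoords π) muInf muInf :=
  MonoidHom.measurePreserving (continuous_pi fun j => continuous_apply (π j))
    (fun z => ⟨z ∘ π.symm, by ext j; simp [permCoords]⟩) rfl

lemma continuous_monomial (α : ℕ →₀ ℕ) : Continuous (monomial α) :=
  continuous_finsetProd _ fun j _ =>
    (continuous_subtype_val.comp (continuous_apply j)).pow _

lemma integrable_of_continuous {E : Type*} [NormedAddCommGroup E] {f : Polytorus → E}
    (hf : Continuous f) : Integrable f muInf :=
  hf.integrable_of_hasCompactSupport (.of_compactSpace f)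

lemma memLp_of_continuous {f : Polytorus → ℂ} (hf : Continuous f) (q : ℝ≥0∞) :
    MemLp f q muInf := by
  obtain ⟨z₀, -, hz₀⟩ := isCompact_univ.exists_isMaxOn Set.univ_nonempty hf.norm.continuousOn
  exact (memLp_top_of_bound hf.aestronglyMeasurable _
    (Eventually.of_forall fun z => hz₀ (Set.mem_univ z))).mono_exponent le_top

lemma continuous_of_mem_span_monomial {S : Set (ℕ →₀ ℕ)} {f : Polytorus → ℂ}
    (hf : f ∈ Submodule.span ℂ (monomial '' S)) : Continuous f := by
  induction hf using Submodule.span_induction with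
  | mem _ h =>
    obtain ⟨α, -, rfl⟩ := h
    exact continuous_monomial α
  | zero => exact continuous_zero
  | add _ _ _ _ hf hg => exact hf.add hg
  | smul c _ _ hf => exact hf.const_smul c

lemma IsAnalyticPoly.continuous {f : Polytorus → ℂ} (hf : IsAnalyticPoly f) : Continuous f :=
  continuous_of_mem_span_monomial (S := Set.univ) (by rwa [Set.image_univ])

lemma IsAnalyticPoly.exists_mem_span_degree_lt {f : Polytorus → ℂ} (hf : IsAnalyticPoly f) :
    ∃ K, 1 < K ∧ f ∈ Submodule.span ℂ (monomial '' {α | α.degree < K}) := by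
  obtain ⟨c, rfl⟩ := Finsupp.mem_span_range_iff_exists_finsupp.mp hf
  refine ⟨c.support.sup Finsupp.degree + 2, by omega, Submodule.sum_mem _ fun α hα =>
    Submodule.smul_mem _ _ (Submodule.subset_span ⟨α, ?_, rfl⟩)⟩
  have := Finset.le_sup (f := Finsupp.degree) hα
  change α.degree < _
  omega

lemma monomial_mul (α : ℕ →₀ ℕ) (x y : Polytorus) :
    monomial α (x * y) = monomial α x * monomial α y := by
  simp only [monomial, Finsupp.prod, ← Finset.prod_mul_distrib, Pi.mul_apply, Circle.coe_mul,
    mul_pow]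

lemma monomial_single_one (j : ℕ) (z : Polytorus) :
    monomial (Finsupp.single j 1) z = z j := by
  simp [monomial, Finsupp.prod_single_index]

noncomputable def rotateCoords (p : ℕ → Prop) [DecidablePred p] (w : Circle) : Polytorus :=
  fun j => if p j then w else 1

lemma monomial_rotateCoords (p : ℕ → Prop) [DecidablePred p] (w : Circle) (α : ℕ →₀ ℕ) :
    monomial α (rotateCoords p w) = (w : ℂ) ^ (α.filter p).degree := by
  rw [monomial, Finsupp.prod, Finsupp.degree_apply, Finsupp.support_filter,
    ← Finset.prod_pow_eq_pow_sum, Finset.prod_filter]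
  refine Finset.prod_congr rfl fun j _ => ?_
  by_cases hj : p j <;> simp [rotateCoords, hj]

lemma conj_pairing (f g : Polytorus → ℂ) : conj (pairing f g) = pairing g f := by
  rw [pairing, ← integral_conj]
  simp [pairing, mul_comm]

lemma pairing_smul_left (c : ℂ) (f g : Polytorus → ℂ) :
    pairing (c • f) g = c * pairing f g := by
  simp [pairing, mul_assoc, integral_const_mul]

lemma pairing_add_left {f₁ f₂ g : Polytorus → ℂ} (hf₁ : Continuous f₁) (hf₂ : Continuous f₂)
    (hg : Continuous g) : pairing (f₁ + f₂) g = pairing f₁ g + pairing f₂ g := by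
  simp only [pairing, Pi.add_apply, add_mul]
  exact integral_add (integrable_of_continuous (hf₁.mul (continuous_conj.comp hg)))
    (integrable_of_continuous (hf₂.mul (continuous_conj.comp hg)))

lemma pairing_monomial_monomial (α β : ℕ →₀ ℕ) :
    pairing (monomial α) (monomial β) = if α = β then 1 else 0 := by
  rw [pairing]
  split_ifs with h
  · subst h
    have hnorm : ∀ z, monomial α z * conj (monomial α z) = 1 := fun z => by
      rw [mul_conj, normSq_eq_norm_sq, monomial, Finsupp.prod, norm_prod]
      simp [Circle.norm_coe]
    simp [hnorm]
  obtain ⟨j, hj⟩ : ∃ j, α j ≠ β j := by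
    by_contra! h'
    exact h (Finsupp.ext h')
  obtain ⟨ζ, hζ⟩ := exists_isPrimitiveRoot_circle (K := α j + β j + 1) (by omega)
  have hne : ζ ^ α j ≠ ζ ^ β j := fun heq => hj (hζ.pow_inj (by omega) (by omega) heq)
  -- rotating the `j`-th coordinate by `ζ` multiplies the integrand by `ζ ^ α j / ζ ^ β j ≠ 1`
  refine integral_eq_zero_of_mul_left_eq (rotateCoords (· = j) ζ)
    (e := ((ζ ^ α j * (ζ ^ β j)⁻¹ : Circle) : ℂ)) ?_ fun z => ?_
  · rwa [Ne, Circle.coe_eq_one, mul_inv_eq_one]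
  · simp only [monomial_mul, monomial_rotateCoords, Finsupp.filter_eq', Finsupp.degree_single,
      map_mul, Circle.coe_mul, Circle.coe_inv_eq_conj, Circle.coe_pow, map_pow]
    ring

lemma continuous_phiFn (d : ℕ) : Continuous (phiFn d) :=
  (continuous_finsetSum _ fun j _ =>
    continuous_subtype_val.comp (continuous_apply j)).div_const _

lemma phiFn_eq_sum (d : ℕ) :
    phiFn d = ∑ j ∈ range d, (Real.sqrt d : ℂ)⁻¹ • monomial (Finsupp.single j 1) := by
  ext z
  simp [phiFn, monomial_single_one, div_eq_inv_mul, Finset.mul_sum]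

lemma isAnalyticPoly_phiFn (d : ℕ) : IsAnalyticPoly (phiFn d) := by
  rw [IsAnalyticPoly, phiFn_eq_sum]
  exact Submodule.sum_mem _ fun j _ => Submodule.smul_mem _ _ (Submodule.subset_span ⟨_, rfl⟩)

lemma pairing_phiFn {f : Polytorus → ℂ} (hf : Continuous f) (d : ℕ) :
    pairing f (phiFn d) =
      ∑ j ∈ range d, (Real.sqrt d : ℂ)⁻¹ * pairing f (monomial (Finsupp.single j 1)) := by
  have hterm : ∀ j ∈ range d, Integrable
      (fun z => (Real.sqrt d : ℂ)⁻¹ * (f z * conj (monomial (Finsupp.single j 1) z))) muInf :=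
    fun j _ => (integrable_of_continuous
      (hf.mul (continuous_conj.comp (continuous_monomial _)))).const_mul _
  simp only [pairing, ← integral_const_mul, ← integral_finsetSum _ hterm]
  congr 1 with z
  simp only [phiFn, div_eq_inv_mul, Finset.mul_sum, map_sum, map_mul, map_inv₀, conj_ofReal,
    monomial_single_one]
  exact Finset.sum_congr rfl fun j _ => by ring

lemma pairing_monomial_phiFn (α : ℕ →₀ ℕ) (d : ℕ) :
    pairing (monomial α) (phiFn d) =
      ∑ j ∈ range d, if α = Finsupp.single j 1 then (Real.sqrt d : ℂ)⁻¹ else 0 := by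
  simp [pairing_phiFn (continuous_monomial α), pairing_monomial_monomial]

lemma pairing_phiFn_phiFn {d : ℕ} (hd : d ≠ 0) : pairing (phiFn d) (phiFn d) = 1 := by
  have hcoord : ∀ j ∈ range d,
      pairing (phiFn d) (monomial (Finsupp.single j 1)) = (Real.sqrt d : ℂ)⁻¹ := fun j hj => by
    rw [← conj_pairing, pairing_monomial_phiFn]
    simp [Finsupp.single_left_inj, hj]
  rw [pairing_phiFn (continuous_phiFn d), Finset.sum_congr rfl fun j hj => by rw [hcoord j hj]]
  rw [Finset.sum_const, card_range, nsmul_eq_mul, ← mul_inv, ← ofReal_mul,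
    Real.mul_self_sqrt d.cast_nonneg, ofReal_natCast, mul_inv_cancel₀ (Nat.cast_ne_zero.mpr hd)]

lemma lpNorm_eq_toReal_eLpNorm {p : ℝ} (hp : 0 < p) {f : Polytorus → ℂ}
    (hf : AEStronglyMeasurable f muInf) :
    lpNorm p f = (eLpNorm f (ENNReal.ofReal p) muInf).toReal := by
  rw [eLpNorm_eq_lintegral_rpow_enorm_toReal (by simpa using hp) ENNReal.ofReal_ne_top,
    ENNReal.toReal_ofReal hp.le, _root_.lpNorm, ← ENNReal.toReal_rpow,
    integral_eq_lintegral_of_nonneg_ae (Eventually.of_forall fun z => by positivity)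
      (hf.norm.aemeasurable.pow_const p).aestronglyMeasurable]
  congr 3 with z
  rw [← ofReal_norm, ENNReal.ofReal_rpow_of_nonneg (norm_nonneg _) hp.le]

lemma lpNorm_smul {p : ℝ} (hp : 0 < p) (c : ℂ) {f : Polytorus → ℂ}
    (hf : AEStronglyMeasurable f muInf) : lpNorm p (c • f) = ‖c‖ * lpNorm p f := by
  rw [lpNorm_eq_toReal_eLpNorm hp (hf.const_smul c), lpNorm_eq_toReal_eLpNorm hp hf,
    eLpNorm_const_smul, ENNReal.toReal_mul, toReal_enorm]

lemma lpNorm_pos {p : ℝ} (hp : 0 < p) {f : Polytorus → ℂ} (hf : Continuous f) (h0 : f ≠ 0) :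
    0 < lpNorm p f := by
  rw [lpNorm_eq_toReal_eLpNorm hp hf.aestronglyMeasurable]
  refine ENNReal.toReal_pos ?_ (memLp_of_continuous hf _).eLpNorm_ne_top
  rwa [Ne, eLpNorm_eq_zero_iff hf.aestronglyMeasurable (by simpa using hp),
    hf.ae_eq_iff_eq muInf continuous_zero]

noncomputable def degreeProjection (ζ : Circle) (K : ℕ) (p : ℕ → Prop) [DecidablePred p]
    (m : ℕ) : (Polytorus → ℂ) →ₗ[ℂ] (Polytorus → ℂ) :=
  twistedAverage (range K) (fun k => (((ζ ^ k) ^ m)⁻¹ : Circle))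
    (fun k z => rotateCoords p (ζ ^ k) * z)

section degreeProjection

variable {ζ : Circle} {K : ℕ} {p : ℕ → Prop} [DecidablePred p] {m : ℕ}

lemma degreeProjection_monomial (hζ : IsPrimitiveRoot ζ K) (hK : K ≠ 0) (α : ℕ →₀ ℕ) :
    degreeProjection ζ K p m (monomial α) =
      if (α.filter p).degree ≡ m [MOD K] then monomial α else 0 := by
  ext z
  have hterm : ∀ k, (((ζ ^ k) ^ m)⁻¹ : Circle) * monomial α (rotateCoords p (ζ ^ k) * z) =
      (((ζ ^ k) ^ (α.filter p).degree * ((ζ ^ k) ^ m)⁻¹ : Circle) : ℂ) * monomial α z :=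
    fun k => by
      rw [monomial_mul, monomial_rotateCoords]
      push_cast
      ring
  rw [degreeProjection, twistedAverage_apply, card_range]
  simp only [hterm, ← Finset.sum_mul, sum_range_pow_mul_inv_pow hζ]
  split_ifs <;> simp [hK]

lemma MeasureTheory.AEStronglyMeasurable.degreeProjection {f : Polytorus → ℂ}
    (hf : AEStronglyMeasurable f muInf) :
    AEStronglyMeasurable (degreeProjection ζ K p m f) muInf :=
  hf.twistedAverage fun _ _ => measurePreserving_mul_left muInf _

lemma eLpNorm_degreeProjection_le {f : Polytorus → ℂ} (hf : AEStronglyMeasurable f muInf)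
    {q : ℝ≥0∞} (hq : 1 ≤ q) :
    eLpNorm (degreeProjection ζ K p m f) q muInf ≤ eLpNorm f q muInf :=
  eLpNorm_twistedAverage_le (fun _ _ => Circle.norm_coe _)
    (fun _ _ => measurePreserving_mul_left muInf _) hf hq

end degreeProjection

def cyclicShift (d : ℕ) [NeZero d] (r : Fin d) : Equiv.Perm ℕ :=
  (Equiv.addLeft r).extendDomain Fin.equivSubtype

lemma cyclicShift_apply_of_lt {d : ℕ} [NeZero d] (r : Fin d) {j : ℕ} (hj : j < d) :
    cyclicShift d r j = ((r + ⟨j, hj⟩ : Fin d) : ℕ) := by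
  rw [cyclicShift, Equiv.Perm.extendDomain_apply_subtype _ Fin.equivSubtype hj]
  rfl

noncomputable def cyclicAverage (d : ℕ) [NeZero d] : (Polytorus → ℂ) →ₗ[ℂ] (Polytorus → ℂ) :=
  twistedAverage univ (fun _ : Fin d => 1) (fun r => permCoords (cyclicShift d r))

section cyclicAverage

variable {d : ℕ} [NeZero d]

lemma cyclicAverage_monomial_single {j : ℕ} (hj : j < d) :
    cyclicAverage d (monomial (Finsupp.single j 1)) = (Real.sqrt d : ℂ)⁻¹ • phiFn d := by
  ext z
  have hsum : ∑ r : Fin d, (z (cyclicShift d r j) : ℂ) = ∑ i ∈ range d, (z i : ℂ) := by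
    rw [← Fin.sum_univ_eq_sum_range (fun i => (z i : ℂ)) d]
    exact Fintype.sum_equiv (Equiv.addRight ⟨j, hj⟩) _ _ fun r => by
      rw [cyclicShift_apply_of_lt _ hj]
      rfl
  simp only [cyclicAverage, twistedAverage_apply, card_univ, Fintype.card_fin, one_mul,
    permCoords, MonoidHom.coe_mk, OneHom.coe_mk, Function.comp_apply, monomial_single_one, hsum,
    Pi.smul_apply, smul_eq_mul, phiFn, div_eq_inv_mul, ← mul_assoc, ← mul_inv, ← ofReal_mul,
    Real.mul_self_sqrt d.cast_nonneg, ofReal_natCast]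

lemma MeasureTheory.AEStronglyMeasurable.cyclicAverage {f : Polytorus → ℂ}
    (hf : AEStronglyMeasurable f muInf) : AEStronglyMeasurable (cyclicAverage d f) muInf :=
  hf.twistedAverage fun r _ => measurePreserving_permCoords (cyclicShift d r)

lemma eLpNorm_cyclicAverage_le {f : Polytorus → ℂ} (hf : AEStronglyMeasurable f muInf)
    {q : ℝ≥0∞} (hq : 1 ≤ q) : eLpNorm (cyclicAverage d f) q muInf ≤ eLpNorm f q muInf :=
  eLpNorm_twistedAverage_le (fun _ _ => norm_one)
    (fun r _ => measurePreserving_permCoords (cyclicShift d r)) hf hq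

end cyclicAverage

noncomputable def phiProjection (d : ℕ) [NeZero d] (ζ : Circle) (K : ℕ) :
    (Polytorus → ℂ) →ₗ[ℂ] (Polytorus → ℂ) :=
  cyclicAverage d ∘ₗ degreeProjection ζ K (· < d) 1 ∘ₗ degreeProjection ζ K (fun _ => True) 1

section phiProjection

variable {d : ℕ} [NeZero d] {ζ : Circle} {K : ℕ}

lemma phiProjection_monomial (hζ : IsPrimitiveRoot ζ K) (hK : 1 < K) {α : ℕ →₀ ℕ}
    (hα : α.degree < K) :
    phiProjection d ζ K (monomial α) = pairing (monomial α) (phiFn d) • phiFn d := by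
  have hmod : ∀ {a}, a < K → (a ≡ 1 [MOD K] ↔ a = 1) := fun ha => by
    rw [Nat.ModEq, Nat.mod_eq_of_lt ha, Nat.mod_eq_of_lt hK]
  have hK0 : K ≠ 0 := by omega
  rw [phiProjection, LinearMap.comp_apply, LinearMap.comp_apply,
    degreeProjection_monomial hζ hK0, (Finsupp.filter_eq_self_iff _ α).mpr fun _ _ => trivial,
    pairing_monomial_phiFn]
  simp only [hmod hα]
  by_cases h1 : α.degree = 1
  · obtain ⟨j, rfl⟩ : ∃ j, Finsupp.single j 1 = α := by
      simpa using (Set.ext_iff.mp Finsupp.range_single_one α).mpr h1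
    rw [if_pos h1, degreeProjection_monomial hζ hK0]
    by_cases hj : j < d
    · rw [Finsupp.filter_single_of_pos (· < d) hj, Finsupp.degree_single,
        if_pos (Nat.ModEq.refl 1), cyclicAverage_monomial_single hj]
      simp [Finsupp.single_left_inj, hj]
    · have hK1 : ¬ (0 ≡ 1 [MOD K]) := by rw [hmod (by omega)]; omega
      rw [Finsupp.filter_single_of_neg (· < d) hj, map_zero, if_neg hK1, map_zero]
      simp [Finsupp.single_left_inj, hj]
  · have hpair : ∀ j ∈ range d, α ≠ Finsupp.single j 1 := fun j _ h => h1 (h ▸ by simp)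
    simp [h1, Finset.sum_ite_of_false hpair]

lemma phiProjection_eq_pairing_smul (hζ : IsPrimitiveRoot ζ K) (hK : 1 < K)
    {f : Polytorus → ℂ} (hf : f ∈ Submodule.span ℂ (monomial '' {α | α.degree < K})) :
    phiProjection d ζ K f = pairing f (phiFn d) • phiFn d := by
  induction hf using Submodule.span_induction with
  | mem _ h =>
    obtain ⟨α, hα, rfl⟩ := h
    exact phiProjection_monomial hζ hK hα
  | zero => simp [pairing]
  | add f g hf hg hf' hg' =>
    rw [map_add, hf', hg', pairing_add_left (continuous_of_mem_span_monomial hf)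
      (continuous_of_mem_span_monomial hg) (continuous_phiFn d), add_smul]
  | smul c f _ hf' => rw [map_smul, hf', pairing_smul_left, smul_smul]

lemma MeasureTheory.AEStronglyMeasurable.phiProjection {f : Polytorus → ℂ}
    (hf : AEStronglyMeasurable f muInf) : AEStronglyMeasurable (phiProjection d ζ K f) muInf :=
  hf.degreeProjection.degreeProjection.cyclicAverage

lemma eLpNorm_phiProjection_le {f : Polytorus → ℂ} (hf : AEStronglyMeasurable f muInf)
    {q : ℝ≥0∞} (hq : 1 ≤ q) : eLpNorm (phiProjection d ζ K f) q muInf ≤ eLpNorm f q muInf :=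
  (eLpNorm_cyclicAverage_le hf.degreeProjection.degreeProjection hq).trans <|
    (eLpNorm_degreeProjection_le hf.degreeProjection hq).trans (eLpNorm_degreeProjection_le hf hq)

end phiProjection

lemma norm_pairing_phiFn_mul_lpNorm_le {p : ℝ} (hp : 1 ≤ p) (d : ℕ) [NeZero d]
    {f : Polytorus → ℂ} (hf : IsAnalyticPoly f) :
    ‖pairing f (phiFn d)‖ * lpNorm p (phiFn d) ≤ lpNorm p f := by
  obtain ⟨K, hK, hfK⟩ := hf.exists_mem_span_degree_lt
  obtain ⟨ζ, hζ⟩ := exists_isPrimitiveRoot_circle (by omega : K ≠ 0)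
  have hp0 : 0 < p := by linarith
  have hfc := hf.continuous
  rw [← lpNorm_smul hp0 _ (continuous_phiFn d).aestronglyMeasurable,
    ← phiProjection_eq_pairing_smul hζ hK hfK,
    lpNorm_eq_toReal_eLpNorm hp0 hfc.aestronglyMeasurable.phiProjection,
    lpNorm_eq_toReal_eLpNorm hp0 hfc.aestronglyMeasurable]
  exact ENNReal.toReal_mono (memLp_of_continuous hfc _).eLpNorm_ne_top
    (eLpNorm_phiProjection_le hfc.aestronglyMeasurable (ENNReal.one_le_ofReal.mpr hp))

/-- `‖φ_d‖_{(H^p)^*} = ‖φ_d‖_{L^p(𝕋^∞)}⁻¹`. -/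
theorem dual_norm_phi_eq_inv (p : ℝ) (hp : 1 ≤ p) (d : ℕ) (hd : 1 ≤ d) :
    dualNorm p (phiFn d) = (lpNorm p (phiFn d))⁻¹ := by
  have : NeZero d := ⟨by omega⟩
  have hp0 : 0 < p := by linarith
  have hφφ := pairing_phiFn_phiFn (d := d) (by omega)
  have hφ0 : phiFn d ≠ 0 := fun h => by simp [h, pairing] at hφφ
  have hφ := lpNorm_pos hp0 (continuous_phiFn d) hφ0
  refine IsGreatest.csSup_eq ⟨⟨phiFn d, isAnalyticPoly_phiFn d, hφ0, by simp [hφφ]⟩, ?_⟩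
  rintro _ ⟨f, hf, hf0, rfl⟩
  rw [div_le_iff₀ (lpNorm_pos hp0 hf.continuous hf0), inv_mul_eq_div, le_div_iff₀ hφ]
  exact norm_pairing_phiFn_mul_lpNorm_le hp d hf
end

section
/- Let 1 ≤ p < ∞ with conjugate exponent q = p/(p-1) (q = ∞ when p = 1), let d ≥ 1, set φ(z) = z_1 + ⋯ + z_d on 𝕋^d, and define ψ(z) = d · ‖φ‖_{L^p(𝕋^d)}^{-p} · |φ(z)|^{p-2} φ(z). Then ‖ψ‖_{L^q(𝕋^d)} = d / ‖φ‖_{L^p(𝕋^d)}, and ψ has minimal L^q norm among all functions with the same analytic Fourier coefficients: if ψ' ∈ L^q(𝕋^d) satisfies ∫_{𝕋^d} ψ'(z) · conj(z_1^{α_1} ⋯ z_d^{α_d}) dμ_d(z) = 1 when α is a standard unit vector e_j and = 0 for every other α ∈ ℕ₀^d, then ‖ψ‖_{L^q(𝕋^d)} ≤ ‖ψ'‖_{L^q(𝕋^d)}. -/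
open MeasureTheory Complex Filter
open scoped ENNReal NNReal

/-- The normalized Lebesgue arc measure on the unit circle, i.e. its Haar probability
measure. -/
noncomputable def muCircle : Measure Circle := Measure.haarMeasure ⊤

instance : IsProbabilityMeasure muCircle :=
  ⟨by simpa [muCircle] using
    Measure.haarMeasure_self (K₀ := (⊤ : TopologicalSpace.PositiveCompacts Circle))⟩

/-- The probability measure `μ_d` on `𝕋^d`: the product of normalized Lebesgue arc
measures. -/
noncomputable def muD (d : ℕ) : Measure (Fin d → Circle) := Measure.pi fun _ => muCircle

/-- `φ(z) = z_1 + ⋯ + z_d` on `𝕋^d`. -/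
noncomputable def phiD (d : ℕ) : (Fin d → Circle) → ℂ := fun z => ∑ j, (z j : ℂ)

/-- The `L^p(𝕋^d)` norm of `φ`. -/
noncomputable def phiNorm (p : ℝ) (d : ℕ) : ℝ :=
  (∫ z : Fin d → Circle, ‖phiD d z‖ ^ p ∂muD d) ^ (1 / p)

/-- The extremal function `ψ(z) = d ‖φ‖_p^{-p} |φ(z)|^{p-2} φ(z)`. -/
noncomputable def psiFn (p : ℝ) (d : ℕ) : (Fin d → Circle) → ℂ := fun z =>
  ((d * (phiNorm p d) ^ (-p) : ℝ) : ℂ) * ((‖phiD d z‖ ^ (p - 2) : ℝ) : ℂ) * phiD d z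

/-!
Both claims are Hölder duality against `conj φ`. Expanding `φ = ∑ z_k` and using the prescribed
coefficients gives `∫ ψ' conj φ = d`, and `ψ conj φ = d ‖φ‖_p^{-p} |φ|^p` gives the same for `ψ`;
Hölder then yields `d ≤ ‖ψ'‖_q ‖φ‖_p`. Conversely `|ψ|` is a multiple of `|φ|^{p-1}` (of the
indicator of `{φ ≠ 0}` when `p = 1`), so `‖ψ‖_q ≤ d / ‖φ‖_p` is a direct computation.
-/

theorem MeasureTheory.enorm_integral_mul_le_eLpNorm_mul_eLpNorm {α 𝕜 : Type*} [RCLike 𝕜]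
    [MeasurableSpace α] {μ : Measure α} {p q : ℝ≥0∞} [p.HolderConjugate q] {f g : α → 𝕜}
    (hf : AEStronglyMeasurable f μ) (hg : AEStronglyMeasurable g μ) :
    ‖∫ x, f x * g x ∂μ‖ₑ ≤ eLpNorm f p μ * eLpNorm g q μ := by
  refine (enorm_integral_le_lintegral_enorm _).trans ?_
  rw [← eLpNorm_one_eq_lintegral_enorm]
  exact eLpNorm_smul_le_mul_eLpNorm (φ := f) hg hf

open ComplexConjugate

@[fun_prop]
theorem Circle.continuous_coe : Continuous ((↑) : Circle → ℂ) := continuous_subtype_val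

section Torus

variable {d : ℕ} {p : ℝ}

instance : Measure.IsMulLeftInvariant muCircle := by
  unfold muCircle; infer_instance

instance : Measure.IsMulLeftInvariant (muD d) := by
  unfold muD; infer_instance

instance : IsProbabilityMeasure (muD d) := by
  unfold muD; infer_instance

theorem continuous_phiD : Continuous (phiD d) := by
  unfold phiD; fun_prop

theorem norm_phiD_le (z : Fin d → Circle) : ‖phiD d z‖ ≤ d :=
  (norm_sum_le _ _).trans_eq <| by
    simp only [Circle.norm_coe, Finset.sum_const, Finset.card_univ, Fintype.card_fin,
      nsmul_eq_mul, mul_one]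

/-- Translating the `j`-th coordinate by `-1` flips the sign of the integrand. -/
theorem integral_coe_mul_conj_coe (j k : Fin d) :
    ∫ z : Fin d → Circle, (z j : ℂ) * conj (z k : ℂ) ∂muD d = if j = k then 1 else 0 := by
  split_ifs with hjk
  · subst hjk
    simp [Complex.mul_conj, Circle.normSq_coe]
  · refine integral_eq_zero_of_mul_left_eq_neg (g := Pi.mulSingle j (Circle.exp Real.pi))
      fun z => ?_
    simp [Ne.symm hjk, Circle.coe_exp, Complex.exp_pi_mul_I]

theorem integral_phiD_mul_conj_coe (k : Fin d) :
    ∫ z : Fin d → Circle, phiD d z * conj (z k : ℂ) ∂muD d = 1 := by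
  have hint (j : Fin d) :
      Integrable (fun z : Fin d → Circle => (z j : ℂ) * conj (z k : ℂ)) (muD d) := by
    refine (integrable_const (1 : ℝ)).mono' (by fun_prop : Continuous _).aestronglyMeasurable
      (.of_forall fun z => ?_)
    simp [Circle.norm_coe]
  simp only [phiD, Finset.sum_mul]
  rw [integral_finsetSum _ fun j _ => hint j]
  simp [integral_coe_mul_conj_coe]

theorem integral_mul_conj_phiD {F : (Fin d → Circle) → ℂ} (hF : Integrable F (muD d)) :
    ∫ z, F z * conj (phiD d z) ∂muD d = ∑ k, ∫ z, F z * conj (z k : ℂ) ∂muD d := by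
  simp only [phiD, map_sum, Finset.mul_sum]
  refine integral_finsetSum _ fun k _ =>
    hF.mul_bdd (c := 1) (by fun_prop : Continuous _).aestronglyMeasurable (.of_forall fun z => ?_)
  simp [Circle.norm_coe]

theorem not_phiD_ae_eq_zero (hd : 0 < d) : ¬ phiD d =ᵐ[muD d] 0 := fun h => by
  have := integral_phiD_mul_conj_coe (d := d) ⟨0, hd⟩
  rw [integral_eq_zero_of_ae (by filter_upwards [h] with z hz; simp [hz])] at this
  exact zero_ne_one this

theorem memLp_phiD (r : ℝ≥0∞) : MemLp (phiD d) r (muD d) :=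
  .of_bound continuous_phiD.aestronglyMeasurable d (.of_forall norm_phiD_le)

theorem eLpNorm_phiD (hp : 0 < p) :
    eLpNorm (phiD d) (ENNReal.ofReal p) (muD d) = ENNReal.ofReal (phiNorm p d) := by
  rw [(memLp_phiD _).eLpNorm_eq_integral_rpow_norm (by simpa using hp) ENNReal.ofReal_ne_top,
    ENNReal.toReal_ofReal hp.le, phiNorm, one_div]

theorem phiNorm_nonneg : 0 ≤ phiNorm p d :=
  Real.rpow_nonneg (integral_nonneg fun _ => by positivity) _

theorem phiNorm_pos (hp : 0 < p) (hd : 0 < d) : 0 < phiNorm p d := by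
  have h : eLpNorm (phiD d) (ENNReal.ofReal p) (muD d) ≠ 0 := fun h =>
    not_phiD_ae_eq_zero hd ((eLpNorm_eq_zero_iff continuous_phiD.aestronglyMeasurable
      (by simpa using hp)).mp h)
  rw [eLpNorm_phiD hp] at h
  exact ENNReal.ofReal_pos.mp (pos_iff_ne_zero.mpr h)

theorem phiNorm_rpow (hp : 0 < p) : phiNorm p d ^ p = ∫ z, ‖phiD d z‖ ^ p ∂muD d := by
  rw [phiNorm, ← Real.rpow_mul (integral_nonneg fun _ => by positivity), one_div_mul_cancel hp.ne',
    Real.rpow_one]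

theorem psiFn_mul_conj_phiD (hp : p ≠ 0) (z : Fin d → Circle) :
    psiFn p d z * conj (phiD d z) = ((d * phiNorm p d ^ (-p) * ‖phiD d z‖ ^ p : ℝ) : ℂ) := by
  have hsq : phiD d z * conj (phiD d z) = ((‖phiD d z‖ ^ 2 : ℝ) : ℂ) := by
    rw [Complex.mul_conj, Complex.normSq_eq_norm_sq, Complex.ofReal_pow]
  rw [psiFn, mul_assoc, hsq, ← Complex.ofReal_mul, ← Complex.ofReal_mul, mul_assoc,
    ← Real.rpow_natCast, ← Real.rpow_add' (norm_nonneg _) (by simpa using hp), Nat.cast_ofNat,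
    sub_add_cancel]

theorem integral_psiFn_mul_conj_phiD (hp : 0 < p) (hd : 0 < d) :
    ∫ z, psiFn p d z * conj (phiD d z) ∂muD d = d := by
  rw [integral_congr_ae (.of_forall (psiFn_mul_conj_phiD hp.ne')), integral_complex_ofReal,
    integral_const_mul, ← phiNorm_rpow hp, mul_assoc, ← Real.rpow_add (phiNorm_pos hp hd),
    neg_add_cancel, Real.rpow_zero, mul_one]
  norm_cast

theorem norm_psiFn (z : Fin d → Circle) :
    ‖psiFn p d z‖ = d * phiNorm p d ^ (-p) * (‖phiD d z‖ ^ (p - 2) * ‖phiD d z‖) := by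
  rw [psiFn, norm_mul, norm_mul, Complex.norm_real, Complex.norm_real, Real.norm_of_nonneg
    (by have := phiNorm_nonneg (p := p) (d := d); positivity),
    Real.norm_of_nonneg (by positivity), mul_assoc]

/-- For `p > 1`, `|ψ| = d ‖φ‖_p^{-p} |φ|^{p-1}` and `(p - 1) q = p`. -/
theorem eLpNorm_psiFn_of_one_lt (hp : 1 < p) (hd : 0 < d) :
    eLpNorm (psiFn p d) (ENNReal.ofReal p.conjExponent) (muD d)
      = ENNReal.ofReal (d / phiNorm p d) := by
  have hN := phiNorm_pos (by linarith) hd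
  have hnorm (z : Fin d → Circle) :
      ‖psiFn p d z‖ = ‖((d * phiNorm p d ^ (-p) : ℝ) • fun z => ‖phiD d z‖ ^ (p - 1)) z‖ := by
    rw [norm_psiFn, Pi.smul_apply, norm_smul, Real.norm_of_nonneg (by positivity),
      Real.norm_of_nonneg (by positivity), ← Real.rpow_add_one' (norm_nonneg _) (by linarith)]
    ring_nf
  have hexp : ENNReal.ofReal p.conjExponent * ENNReal.ofReal (p - 1) = ENNReal.ofReal p := by
    rw [← ENNReal.ofReal_mul (by positivity [(Real.HolderConjugate.conjExponent hp).symm.pos]),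
      mul_comm, (Real.HolderConjugate.conjExponent hp).sub_one_mul_conj]
  rw [eLpNorm_congr_norm_ae (.of_forall hnorm), eLpNorm_const_smul, eLpNorm_norm_rpow _
    (by linarith), hexp, eLpNorm_phiD (by linarith), Real.enorm_eq_ofReal (by positivity),
    ENNReal.ofReal_rpow_of_nonneg hN.le (by linarith), ← ENNReal.ofReal_mul (by positivity),
    mul_assoc, ← Real.rpow_add hN, div_eq_mul_inv, ← Real.rpow_neg_one]
  ring_nf

theorem eLpNorm_psiFn_one_top_le (hd : 0 < d) :
    eLpNorm (psiFn 1 d) ∞ (muD d) ≤ ENNReal.ofReal (d / phiNorm 1 d) := by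
  refine eLpNorm_exponent_top.trans_le (eLpNormEssSup_le_of_ae_bound (.of_forall fun z => ?_))
  rw [norm_psiFn, show (1 : ℝ) - 2 = -1 by norm_num, Real.rpow_neg_one, Real.rpow_neg_one,
    div_eq_mul_inv]
  exact mul_le_of_le_one_right (by have := phiNorm_nonneg (p := 1) (d := d); positivity)
    (inv_mul_le_one_of_le₀ le_rfl (norm_nonneg _))

theorem eLpNorm_psiFn_le {q : ℝ≥0∞} [hq : (ENNReal.ofReal p).HolderConjugate q] (hp : 1 ≤ p)
    (hd : 0 < d) : eLpNorm (psiFn p d) q (muD d) ≤ ENNReal.ofReal (d / phiNorm p d) := by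
  rcases hp.eq_or_lt with rfl | hp
  · rw [ENNReal.ofReal_one] at hq
    rw [ENNReal.HolderConjugate.unique 1 q ∞]
    exact eLpNorm_psiFn_one_top_le hd
  · have := (Real.HolderConjugate.conjExponent hp).ennrealOfReal
    rw [ENNReal.HolderConjugate.unique (ENNReal.ofReal p) q (ENNReal.ofReal p.conjExponent)]
    exact (eLpNorm_psiFn_of_one_lt hp hd).le

theorem measurable_psiFn : Measurable (psiFn p d) := by
  have := continuous_phiD (d := d)
  unfold psiFn; fun_prop

theorem ofReal_div_phiNorm_le_eLpNorm {q : ℝ≥0∞} [(ENNReal.ofReal p).HolderConjugate q]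
    (hp : 0 < p) (hd : 0 < d) {F : (Fin d → Circle) → ℂ} (hF : AEStronglyMeasurable F (muD d))
    (hpair : ∫ z, F z * conj (phiD d z) ∂muD d = d) :
    ENNReal.ofReal (d / phiNorm p d) ≤ eLpNorm F q (muD d) := by
  have hconj : eLpNorm (fun z => conj (phiD d z)) (ENNReal.ofReal p) (muD d)
      = ENNReal.ofReal (phiNorm p d) := by
    rw [← eLpNorm_phiD hp]
    exact eLpNorm_congr_norm_ae (.of_forall fun z => RCLike.norm_conj _)
  have hHolder : ‖∫ z, F z * conj (phiD d z) ∂muD d‖ₑ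
      ≤ eLpNorm F q (muD d) * eLpNorm (fun z => conj (phiD d z)) (ENNReal.ofReal p) (muD d) :=
    enorm_integral_mul_le_eLpNorm_mul_eLpNorm hF
      (Complex.continuous_conj.comp continuous_phiD).aestronglyMeasurable
  rw [hpair, hconj, ← ofReal_norm, Complex.norm_natCast] at hHolder
  rw [ENNReal.ofReal_div_of_pos (phiNorm_pos hp hd)]
  exact ENNReal.div_le_of_le_mul hHolder

end Torus

open scoped Classical in
/-- `‖ψ‖_{L^q(𝕋^d)} = d/‖φ‖_{L^p(𝕋^d)}`, and `ψ` has minimal `L^q` norm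
among all functions whose Riesz projection equals `φ`. -/
theorem psi_norm_and_minimal (p : ℝ) (hp : 1 ≤ p) (d : ℕ) (hd : 1 ≤ d) (q : ℝ≥0∞)
    (hq : (ENNReal.ofReal p)⁻¹ + q⁻¹ = 1) :
    eLpNorm (psiFn p d) q (muD d) = ENNReal.ofReal (d / phiNorm p d) ∧
      ∀ ψ' : (Fin d → Circle) → ℂ, MemLp ψ' q (muD d) →
        (∀ α : Fin d → ℕ,
          ∫ z : Fin d → Circle, ψ' z * (starRingEnd ℂ) (∏ j, (z j : ℂ) ^ α j) ∂muD d
            = if ∃ j : Fin d, α = Pi.single j 1 then 1 else 0) →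
        eLpNorm (psiFn p d) q (muD d) ≤ eLpNorm ψ' q (muD d) := by
  have : (ENNReal.ofReal p).HolderConjugate q := ENNReal.holderConjugate_iff.mpr hq
  have hp0 : 0 < p := by linarith
  have hψ : eLpNorm (psiFn p d) q (muD d) = ENNReal.ofReal (d / phiNorm p d) :=
    (eLpNorm_psiFn_le hp hd).antisymm <| ofReal_div_phiNorm_le_eLpNorm hp0 hd
      measurable_psiFn.aestronglyMeasurable (integral_psiFn_mul_conj_phiD hp0 hd)
  refine ⟨hψ, fun ψ' hψ' hcoef => hψ ▸ ofReal_div_phiNorm_le_eLpNorm hp0 hd hψ'.1 ?_⟩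
  have hint : Integrable ψ' (muD d) := memLp_one_iff_integrable.mp
    (hψ'.mono_exponent (ENNReal.HolderConjugate.one_le q (ENNReal.ofReal p)))
  have hcoef' (k : Fin d) : ∫ z, ψ' z * conj (z k : ℂ) ∂muD d = 1 := by
    have := hcoef (Pi.single k 1)
    rw [if_pos ⟨k, rfl⟩] at this
    simpa [Pi.single_apply, pow_ite] using this
  simp [integral_mul_conj_phiD hint, hcoef']
end
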